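/- arXiv:1512.00243 — 10 statements merged into one kernel-verified Lean document; each statement's English description precedes it below -/
import Mathlib

section
/- Let E be a real reflexive Banach space, C a nonempty closed convex subset of E, f : E → (−∞,+∞] a Legendre function, φ : C → ℝ a lower semicontinuous convex function, and Θ : C × C → ℝ a bifunction satisfying conditions (A1)–(A5). Then the mixed resolvent Res^f_{Θ,φ} is single-valued: if z₁, z₂ ∈ C both satisfy Θ(zᵢ,y) + φ(y) + ⟨∇f(zᵢ) − ∇f(x), y − zᵢ⟩ ≥ φ(zᵢ) for all y ∈ C, then z₁ = z₂. -/
open Filter Bornology Set Topology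

noncomputable section

variable {E : Type*}

/-- `f' : E →L[ℝ] ℝ` is the Gâteaux derivative (gradient) of `f` at `x`. -/
def HasGateauxDerivAt [NormedAddCommGroup E] [NormedSpace ℝ E]
    (f : E → ℝ) (f' : E →L[ℝ] ℝ) (x : E) : Prop :=
  ∀ y : E, Tendsto (fun t : ℝ => (f (x + t • y) - f x) / t) (𝓝[≠] (0:ℝ)) (𝓝 (f' y))

/-- The Bregman distance `D_f(x,y) = f x − f y − ⟨∇f y, x − y⟩` with respect to `f`,
whose Gâteaux gradient is `gradf`. -/
def Df [NormedAddCommGroup E] [NormedSpace ℝ E]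
    (f : E → ℝ) (gradf : E → E →L[ℝ] ℝ) (x y : E) : ℝ :=
  f x - f y - gradf y (x - y)

/-- A real normed space is reflexive: the canonical embedding into its double dual
is surjective. -/
def IsReflexive (E : Type*) [NormedAddCommGroup E] [NormedSpace ℝ E] : Prop :=
  Function.Surjective (NormedSpace.inclusionInDoubleDual ℝ E)

/-- A Legendre function on `E`.  Since the statements below apply the gradient `∇f` at
arbitrary points of `E`, the function is taken to be finite everywhere, so
`dom f = int (dom f) = E` and condition (L1) amounts to Gâteaux differentiability of `f` on
all of `E`; conditions (L1)–(L2) then further force (in a reflexive space) `f` and `f*` to be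
strictly convex on the interiors of their domains, which for `f` we record as strict
convexity on `E`. -/
structure IsLegendre [NormedAddCommGroup E] [NormedSpace ℝ E]
    (f : E → ℝ) (gradf : E → E →L[ℝ] ℝ) : Prop where
  convexOn : ConvexOn ℝ Set.univ f
  gateaux : ∀ x : E, HasGateauxDerivAt f (gradf x) x
  strictConvexOn : StrictConvexOn ℝ Set.univ f

/-- `z` belongs to the mixed resolvent `Res^f_{Θ,φ}(x)`. -/
def InMixedResolvent [NormedAddCommGroup E] [NormedSpace ℝ E]
    (gradf : E → E →L[ℝ] ℝ) (C : Set E) (Θ : E → E → ℝ) (φ : E → ℝ)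
    (x z : E) : Prop :=
  z ∈ C ∧ ∀ y ∈ C, Θ z y + φ y + (gradf z - gradf x) (y - z) ≥ φ z

/-- Gradient inequality for a convex Gâteaux differentiable function. -/
theorem gradient_ineq_aux [NormedAddCommGroup E] [NormedSpace ℝ E]
    (f : E → ℝ) (gradf : E → E →L[ℝ] ℝ)
    (hconv : ConvexOn ℝ Set.univ f)
    (hg : ∀ x : E, HasGateauxDerivAt f (gradf x) x)
    (x v : E) : gradf x v ≤ f (x + v) - f x := by
  have htend : Tendsto (fun t : ℝ => (f (x + t • v) - f x) / t) (𝓝[>] (0:ℝ))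
      (𝓝 (gradf x v)) :=
    (hg x v).mono_left (nhdsWithin_mono _ (fun t ht => ne_of_gt ht))
  refine le_of_tendsto htend ?_
  filter_upwards [Ioc_mem_nhdsGT_of_mem (by simp : (0:ℝ) ∈ Ico (0:ℝ) 1)] with t ht
  obtain ⟨ht0, ht1⟩ := ht
  have hc := hconv.2 (Set.mem_univ x) (Set.mem_univ (x + v))
      (by linarith : (0:ℝ) ≤ 1 - t) ht0.le (by ring)
  have hx : (1 - t) • x + t • (x + v) = x + t • v := by
    simp [smul_add, sub_smul]; abel
  rw [hx] at hc
  simp only [smul_eq_mul] at hc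
  rw [div_le_iff₀ ht0]
  nlinarith [hc]

/-- Strict gradient inequality for a strictly convex Gâteaux differentiable function. -/
theorem strict_gradient_ineq_aux [NormedAddCommGroup E] [NormedSpace ℝ E]
    (f : E → ℝ) (gradf : E → E →L[ℝ] ℝ)
    (hconv : ConvexOn ℝ Set.univ f)
    (hsconv : StrictConvexOn ℝ Set.univ f)
    (hg : ∀ x : E, HasGateauxDerivAt f (gradf x) x)
    (x y : E) (hxy : x ≠ y) : gradf x (y - x) < f y - f x := by
  have h1 : gradf x ((1/2 : ℝ) • (y - x)) ≤ f (x + (1/2 : ℝ) • (y - x)) - f x :=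
    gradient_ineq_aux f gradf hconv hg x _
  have hmid : x + (1/2 : ℝ) • (y - x) = (1/2 : ℝ) • x + (1/2 : ℝ) • y := by
    rw [smul_sub]; module
  have h2 : f ((1/2 : ℝ) • x + (1/2 : ℝ) • y) < (1/2 : ℝ) * f x + (1/2 : ℝ) * f y :=
    hsconv.2 (Set.mem_univ x) (Set.mem_univ y) hxy (by norm_num) (by norm_num) (by norm_num)
  rw [hmid] at h1
  rw [map_smul] at h1
  simp only [smul_eq_mul] at h1
  linarith

/-- For a Legendre function `f` on a real reflexive Banach space and a
bifunction `Θ` satisfying (A1)–(A5) together with a lower semicontinuous convex `φ`,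
the mixed resolvent `Res^f_{Θ,φ}` is single-valued. -/
theorem mixed_resolvent_single_valued
    [NormedAddCommGroup E] [NormedSpace ℝ E] [CompleteSpace E]
    (hrefl : IsReflexive E)
    (C : Set E) (hCne : C.Nonempty) (hCclosed : IsClosed C) (hCconvex : Convex ℝ C)
    (f : E → ℝ) (gradf : E → E →L[ℝ] ℝ)
    (hLegendre : IsLegendre f gradf)
    (φ : E → ℝ) (hφlsc : LowerSemicontinuousOn φ C) (hφconv : ConvexOn ℝ C φ)
    (Θ : E → E → ℝ)
    (hA1 : ∀ u ∈ C, Θ u u = 0)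
    (hA2 : ∀ u ∈ C, ∀ v ∈ C, Θ u v + Θ v u ≤ 0)
    (hA3 : ∀ v ∈ C, UpperSemicontinuousOn (fun u : WeakSpace ℝ E => Θ u v) C)
    (hA4 : ∀ u ∈ C, ConvexOn ℝ C (Θ u))
    (hA5 : ∀ u ∈ C, LowerSemicontinuousOn (Θ u) C)
    (x z₁ z₂ : E)
    (hz₁ : InMixedResolvent gradf C Θ φ x z₁)
    (hz₂ : InMixedResolvent gradf C Θ φ x z₂) :
    z₁ = z₂ := by
  by_contra hne
  have h1 := hz₁.2 z₂ hz₂.1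
  have h2 := hz₂.2 z₁ hz₁.1
  have hmono := hA2 z₁ hz₁.1 z₂ hz₂.1
  have hs1 : gradf z₁ (z₂ - z₁) < f z₂ - f z₁ :=
    strict_gradient_ineq_aux f gradf hLegendre.convexOn hLegendre.strictConvexOn
      hLegendre.gateaux z₁ z₂ hne
  have hs2 : gradf z₂ (z₁ - z₂) < f z₁ - f z₂ :=
    strict_gradient_ineq_aux f gradf hLegendre.convexOn hLegendre.strictConvexOn
      hLegendre.gateaux z₂ z₁ (Ne.symm hne)
  simp only [ContinuousLinearMap.sub_apply] at h1 h2
  have hx1 : gradf x (z₂ - z₁) + gradf x (z₁ - z₂) = 0 := by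
    rw [← map_add]; simp
  linarith
end
end

section
/- Let E be a real reflexive Banach space, C a nonempty closed convex subset of E, f : E → (−∞,+∞] a Legendre function, φ : C → ℝ a lower semicontinuous convex function, and Θ : C × C → ℝ a bifunction satisfying conditions (A1)–(A5). Then the (single-valued) mixed resolvent T = Res^f_{Θ,φ} is a Bregman firmly nonexpansive operator: for all x, y ∈ E, ⟨∇f(Tx) − ∇f(Ty), Tx − Ty⟩ ≤ ⟨∇f(x) − ∇f(y), Tx − Ty⟩. -/
open Filter Bornology Set Topology

noncomputable section

variable {E : Type*}

/-- For a Legendre function `f` and a bifunction `Θ` satisfying (A1)–(A5),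
the (single-valued) mixed resolvent `T = Res^f_{Θ,φ}` is Bregman firmly nonexpansive:
`⟨∇f(Tx) − ∇f(Ty), Tx − Ty⟩ ≤ ⟨∇f(x) − ∇f(y), Tx − Ty⟩` for all `x, y ∈ E`. -/
theorem mixed_resolvent_BFNE
    [NormedAddCommGroup E] [NormedSpace ℝ E] [CompleteSpace E]
    (hrefl : IsReflexive E)
    (C : Set E) (hCne : C.Nonempty) (hCclosed : IsClosed C) (hCconvex : Convex ℝ C)
    (f : E → ℝ) (gradf : E → E →L[ℝ] ℝ)
    (hLegendre : IsLegendre f gradf)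
    (φ : E → ℝ) (hφlsc : LowerSemicontinuousOn φ C) (hφconv : ConvexOn ℝ C φ)
    (Θ : E → E → ℝ)
    (hA1 : ∀ u ∈ C, Θ u u = 0)
    (hA2 : ∀ u ∈ C, ∀ v ∈ C, Θ u v + Θ v u ≤ 0)
    (hA3 : ∀ v ∈ C, UpperSemicontinuousOn (fun u : WeakSpace ℝ E => Θ u v) C)
    (hA4 : ∀ u ∈ C, ConvexOn ℝ C (Θ u))
    (hA5 : ∀ u ∈ C, LowerSemicontinuousOn (Θ u) C)
    (R : E → E) (hR : ∀ u : E, InMixedResolvent gradf C Θ φ u (R u))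
    (x y : E) :
    (gradf (R x) - gradf (R y)) (R x - R y) ≤ (gradf x - gradf y) (R x - R y) := by
  obtain ⟨hx, hx2⟩ := hR x
  obtain ⟨hy, hy2⟩ := hR y
  have h1 := hx2 (R y) hy
  have h2 := hy2 (R x) hx
  have h3 := hA2 (R x) hx (R y) hy
  simp only [ContinuousLinearMap.sub_apply, map_sub] at *
  linarith
end
end

section
/- Let E be a real reflexive Banach space, C a nonempty closed convex subset of E, f : E → (−∞,+∞] a Legendre function, φ : C → ℝ a lower semicontinuous convex function, and Θ : C × C → ℝ a bifunction satisfying conditions (A1)–(A5). Then the solution set MEP(Θ) = {x ∈ C : Θ(x,y) + φ(y) ≥ φ(x) for all y ∈ C} of the mixed equilibrium problem is a closed and convex subset of C. -/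
open Filter Bornology Set Topology

noncomputable section

variable {E : Type*}

/-- The solution set of the mixed equilibrium problem for `Θ` and `φ` on `C`. -/
def MEP [NormedAddCommGroup E] [NormedSpace ℝ E]
    (C : Set E) (Θ : E → E → ℝ) (φ : E → ℝ) : Set E :=
  {u ∈ C | ∀ y ∈ C, Θ u y + φ y ≥ φ u}

/-- A sublevel set of a function lower semicontinuous on a closed set is closed. -/
lemma aux_sublevel_closed {X : Type*} [TopologicalSpace X] {C : Set X} (hC : IsClosed C)
    {h : X → ℝ} (hh : LowerSemicontinuousOn h C) (c : ℝ) :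
    IsClosed {u ∈ C | h u ≤ c} := by
  rw [← isOpen_compl_iff, isOpen_iff_mem_nhds]
  intro x hx
  by_cases hxC : x ∈ C
  · have hxc : c < h x := by
      by_contra hcon
      exact hx ⟨hxC, le_of_not_gt hcon⟩
    have := hh x hxC c hxc
    rw [eventually_nhdsWithin_iff] at this
    filter_upwards [this] with z hz hzS
    exact absurd (hz hzS.1) (not_lt.2 hzS.2)
  · filter_upwards [hC.isOpen_compl.mem_nhds hxC] with z hz hzS
    exact hz hzS.1

/-- The solution set `MEP(Θ)` of the mixed equilibrium problem is a closed
and convex subset of `C`. -/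
theorem MEP_closed_convex
    [NormedAddCommGroup E] [NormedSpace ℝ E] [CompleteSpace E]
    (hrefl : IsReflexive E)
    (C : Set E) (hCne : C.Nonempty) (hCclosed : IsClosed C) (hCconvex : Convex ℝ C)
    (f : E → ℝ) (gradf : E → E →L[ℝ] ℝ)
    (hLegendre : IsLegendre f gradf)
    (φ : E → ℝ) (hφlsc : LowerSemicontinuousOn φ C) (hφconv : ConvexOn ℝ C φ)
    (Θ : E → E → ℝ)
    (hA1 : ∀ u ∈ C, Θ u u = 0)
    (hA2 : ∀ u ∈ C, ∀ v ∈ C, Θ u v + Θ v u ≤ 0)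
    (hA3 : ∀ v ∈ C, UpperSemicontinuousOn (fun u : WeakSpace ℝ E => Θ u v) C)
    (hA4 : ∀ u ∈ C, ConvexOn ℝ C (Θ u))
    (hA5 : ∀ u ∈ C, LowerSemicontinuousOn (Θ u) C)
    : IsClosed (MEP C Θ φ) ∧ Convex ℝ (MEP C Θ φ) ∧ MEP C Θ φ ⊆ C := by
  -- Minty-type reformulation: the solution set equals the "dual" set
  have hMinty : MEP C Θ φ = {u ∈ C | ∀ y ∈ C, Θ y u + φ u ≤ φ y} := by
    ext u
    constructor
    · rintro ⟨huC, hu⟩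
      refine ⟨huC, fun y hy => ?_⟩
      have h1 := hu y hy
      have h2 := hA2 y hy u huC
      linarith
    · rintro ⟨huC, hu⟩
      refine ⟨huC, fun y hy => ?_⟩
      by_contra hcon
      push_neg at hcon
      set c : ℝ := (Θ u y + (φ u - φ y)) / 2 with hc
      have hc1 : Θ u y < c := by simp only [hc]; linarith
      have hc2 : c < φ u - φ y := by simp only [hc]; linarith
      -- the path from u towards y
      set g : ℝ → E := fun t => u + t • (y - u) with hgdef
      have hgconv : ∀ t ∈ Ioo (0:ℝ) 1, g t = (1 - t) • u + t • y := by
        intro t _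
        simp only [hgdef, smul_sub, sub_smul, one_smul]
        abel
      have hgC : ∀ t ∈ Ioo (0:ℝ) 1, g t ∈ C := by
        intro t ht
        rw [hgconv t ht]
        exact hCconvex huC hy (by linarith [ht.2]) (le_of_lt ht.1) (by ring)
      -- key inequality along the path
      have hkey : ∀ t ∈ Ioo (0:ℝ) 1, (1 - t) * (φ u - φ y) ≤ Θ (g t) y := by
        intro t ht
        have hzC : g t ∈ C := hgC t ht
        have h0 : Θ (g t) (g t) = 0 := hA1 _ hzC
        have hconvθ := (hA4 _ hzC).2 huC hy (by linarith [ht.2] : (0:ℝ) ≤ 1 - t)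
          (le_of_lt ht.1) (by ring)
        rw [← hgconv t ht] at hconvθ
        have hconvφ := hφconv.2 huC hy (by linarith [ht.2] : (0:ℝ) ≤ 1 - t)
          (le_of_lt ht.1) (by ring)
        rw [← hgconv t ht] at hconvφ
        simp only [smul_eq_mul] at hconvθ hconvφ
        have hdual := hu (g t) hzC
        have h4 : Θ (g t) u ≤ t * (φ y - φ u) := by linarith
        have h5 : (0:ℝ) ≤ (1 - t) * Θ (g t) u + t * Θ (g t) y := by linarith
        nlinarith [ht.1, ht.2, h4, h5]
      -- weak upper semicontinuity at u
      have husc := hA3 y hy u huC c hc1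
      -- g tends to u in the weak topology, within C
      have hgcont : Tendsto g (𝓝[>] (0:ℝ)) (𝓝 u) := by
        have : Tendsto g (𝓝 (0:ℝ)) (𝓝 (g 0)) := by
          apply Continuous.tendsto
          exact continuous_const.add (continuous_id.smul continuous_const)
        simp only [hgdef, zero_smul, add_zero] at this
        exact this.mono_left nhdsWithin_le_nhds
      set gw : ℝ → WeakSpace ℝ E := fun t => toWeakSpaceCLM ℝ E (g t) with hgw
      have hgwC : Tendsto gw (𝓝[>] (0:ℝ)) (𝓝[C] (toWeakSpaceCLM ℝ E u)) := by
        apply tendsto_nhdsWithin_of_tendsto_nhds_of_eventually_within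
        · exact ((toWeakSpaceCLM ℝ E).continuous.tendsto u).comp hgcont
        · filter_upwards [Ioo_mem_nhdsGT_of_mem (Set.left_mem_Ico.2 one_pos)] with t ht
          exact hgC t ht
      have hev1 : ∀ᶠ t in 𝓝[>] (0:ℝ), Θ (g t) y < c := hgwC.eventually husc
      have hev2 : ∀ᶠ t in 𝓝[>] (0:ℝ), c < (1 - t) * (φ u - φ y) := by
        have htend : Tendsto (fun t : ℝ => (1 - t) * (φ u - φ y)) (𝓝[>] (0:ℝ))
            (𝓝 ((1 - 0) * (φ u - φ y))) := by
          apply Tendsto.mono_left _ nhdsWithin_le_nhds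
          exact ((continuous_const.sub continuous_id).mul continuous_const).tendsto 0
        simp only [sub_zero, one_mul] at htend
        exact htend.eventually (eventually_gt_nhds hc2)
      have hev3 : ∀ᶠ t in 𝓝[>] (0:ℝ), t ∈ Ioo (0:ℝ) 1 :=
        Ioo_mem_nhdsGT_of_mem (Set.left_mem_Ico.2 one_pos)
      obtain ⟨t, h1, h2, h3⟩ := (hev1.and (hev2.and hev3)).exists
      linarith [hkey t h3]
  constructor
  · -- closedness
    rw [hMinty]
    have : {u ∈ C | ∀ y ∈ C, Θ y u + φ u ≤ φ y}
        = ⋂ y ∈ C, {u ∈ C | Θ y u + φ u ≤ φ y} := by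
      ext u
      simp only [Set.mem_setOf_eq, Set.mem_iInter]
      constructor
      · rintro ⟨huC, hu⟩ y hy
        exact ⟨huC, hu y hy⟩
      · intro h
        obtain ⟨y0, hy0⟩ := hCne
        exact ⟨(h y0 hy0).1, fun y hy => (h y hy).2⟩
    rw [this]
    apply isClosed_biInter
    intro y hy
    exact aux_sublevel_closed hCclosed ((hA5 y hy).add hφlsc) (φ y)
  constructor
  · -- convexity
    rw [hMinty]
    rintro u ⟨huC, hu⟩ v ⟨hvC, hv⟩ a b ha hb hab
    refine ⟨hCconvex huC hvC ha hb hab, fun y hy => ?_⟩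
    have h1 := (hA4 y hy).2 huC hvC ha hb hab
    have h2 := hφconv.2 huC hvC ha hb hab
    simp only [smul_eq_mul] at h1 h2
    have h3 : a * (Θ y u + φ u) ≤ a * φ y := mul_le_mul_of_nonneg_left (hu y hy) ha
    have h4 : b * (Θ y v + φ v) ≤ b * φ y := mul_le_mul_of_nonneg_left (hv y hy) hb
    have hab' : a * φ y + b * φ y = φ y := by rw [← add_mul, hab, one_mul]
    have h3' : a * Θ y u + a * φ u ≤ a * φ y := by linarith [h3, (mul_add a (Θ y u) (φ u)).symm.le]
    have h4' : b * Θ y v + b * φ v ≤ b * φ y := by linarith [h4, (mul_add b (Θ y v) (φ v)).symm.le]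
    linarith [h1, h2, h3', h4', hab']
  · exact fun u hu => hu.1
end
end

section
/- Let E be a real reflexive Banach space, C a nonempty closed convex subset of E, f : E → (−∞,+∞] a Legendre function, φ : C → ℝ a lower semicontinuous convex function, and Θ : C × C → ℝ a bifunction satisfying conditions (A1)–(A5). Then for every x ∈ E and every fixed point p of the mixed resolvent Res^f_{Θ,φ}, one has D_f(p, Res^f_{Θ,φ}(x)) + D_f(Res^f_{Θ,φ}(x), x) ≤ D_f(p, x). -/
open Filter Bornology Set Topology

noncomputable section

variable {E : Type*}

/-- For every `x ∈ E` and every fixed point `p` of the mixed resolvent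
`Res^f_{Θ,φ}`, one has `D_f(p, Res^f_{Θ,φ}(x)) + D_f(Res^f_{Θ,φ}(x), x) ≤ D_f(p, x)`. -/
theorem mixed_resolvent_bregman_inequality
    [NormedAddCommGroup E] [NormedSpace ℝ E] [CompleteSpace E]
    (hrefl : IsReflexive E)
    (C : Set E) (hCne : C.Nonempty) (hCclosed : IsClosed C) (hCconvex : Convex ℝ C)
    (f : E → ℝ) (gradf : E → E →L[ℝ] ℝ)
    (hLegendre : IsLegendre f gradf)
    (φ : E → ℝ) (hφlsc : LowerSemicontinuousOn φ C) (hφconv : ConvexOn ℝ C φ)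
    (Θ : E → E → ℝ)
    (hA1 : ∀ u ∈ C, Θ u u = 0)
    (hA2 : ∀ u ∈ C, ∀ v ∈ C, Θ u v + Θ v u ≤ 0)
    (hA3 : ∀ v ∈ C, UpperSemicontinuousOn (fun u : WeakSpace ℝ E => Θ u v) C)
    (hA4 : ∀ u ∈ C, ConvexOn ℝ C (Θ u))
    (hA5 : ∀ u ∈ C, LowerSemicontinuousOn (Θ u) C)
    (R : E → E) (hR : ∀ u : E, InMixedResolvent gradf C Θ φ u (R u))
    (x p : E) (hp : R p = p) :
    Df f gradf p (R x) + Df f gradf (R x) x ≤ Df f gradf p x := by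
  obtain ⟨hzC, hz⟩ := hR x
  have hpC : p ∈ C := hp ▸ (hR p).1
  have hpineq := (hR p).2
  rw [hp] at hpineq
  have h1 := hz p hpC
  have h2 := hpineq (R x) hzC
  have hA := hA2 (R x) hzC p hpC
  simp only [sub_self, ContinuousLinearMap.zero_apply, add_zero] at h2
  simp only [ContinuousLinearMap.sub_apply] at h1
  have key : gradf (R x) (p - R x) - gradf x (p - R x) ≥ 0 := by linarith
  have hsplit : gradf x (p - x) = gradf x (p - R x) + gradf x (R x - x) := by
    rw [← map_add]; congr 1; abel
  simp only [Df]
  linarith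
end
end

section
/- Let E be a reflexive real Banach space and f : E → (−∞,+∞] a convex Gâteaux differentiable function. Then f is totally convex on bounded subsets of E if and only if f is sequentially consistent, i.e., for any two sequences {x_n}, {y_n} ⊂ E with {x_n} bounded, lim_{n→∞} D_f(y_n, x_n) = 0 implies lim_{n→∞} ‖y_n − x_n‖ = 0. -/
open Filter Bornology Set Topology

noncomputable section

variable {E : Type*}

/-- `f` is totally convex on bounded subsets of `E`: the modulus of total convexity
`ν_f(B,t) = inf {D_f(y,x) : x ∈ B ∩ dom f, y ∈ dom f, ‖y − x‖ = t}` is positive for every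
nonempty bounded `B ⊆ E` and every `t > 0`. -/
def TotallyConvexOnBounded [NormedAddCommGroup E] [NormedSpace ℝ E]
    (f : E → ℝ) (gradf : E → E →L[ℝ] ℝ) : Prop :=
  ∀ B : Set E, B.Nonempty → IsBounded B → ∀ t > (0:ℝ), ∃ c > (0:ℝ),
    ∀ x ∈ B, ∀ y : E, ‖y - x‖ = t → c ≤ Df f gradf y x

/-- `f` is sequentially consistent: for sequences `{x_n}, {y_n}` with `{x_n}` bounded,
`D_f(y_n, x_n) → 0` implies `‖y_n − x_n‖ → 0`. -/
def SequentiallyConsistent [NormedAddCommGroup E] [NormedSpace ℝ E]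
    (f : E → ℝ) (gradf : E → E →L[ℝ] ℝ) : Prop :=
  ∀ x y : ℕ → E, IsBounded (Set.range x) →
    Tendsto (fun n => Df f gradf (y n) (x n)) atTop (𝓝 0) →
    Tendsto (fun n => ‖y n - x n‖) atTop (𝓝 0)


private lemma Df_nonneg' [NormedAddCommGroup E] [NormedSpace ℝ E]
    (f : E → ℝ) (gradf : E → E →L[ℝ] ℝ)
    (hconv : ConvexOn ℝ Set.univ f)
    (hgateaux : ∀ u : E, HasGateauxDerivAt f (gradf u) u) (x y : E) :
    0 ≤ Df f gradf x y := by
  have key : gradf y (x - y) ≤ f x - f y := by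
    have h := (hgateaux y (x - y)).mono_left (nhdsWithin_mono _
      (show Set.Ioi (0:ℝ) ⊆ {(0:ℝ)}ᶜ from fun t ht => ne_of_gt ht))
    refine le_of_tendsto h ?_
    filter_upwards [Ioc_mem_nhdsGT_of_mem (by norm_num : (0:ℝ) ∈ Ico (0:ℝ) 1)] with t ht
    obtain ⟨ht0, ht1⟩ := ht
    rw [div_le_iff₀ ht0]
    have hc := hconv.2 (mem_univ y) (mem_univ x) (by linarith : (0:ℝ) ≤ 1 - t)
      (le_of_lt ht0) (by ring)
    have heq : (1 - t) • y + t • x = y + t • (x - y) := by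
      rw [smul_sub, sub_smul, one_smul]; abel
    rw [heq] at hc
    simp only [smul_eq_mul] at hc
    nlinarith
  simp only [Df]
  linarith

private lemma Df_segment [NormedAddCommGroup E] [NormedSpace ℝ E]
    (f : E → ℝ) (gradf : E → E →L[ℝ] ℝ)
    (hconv : ConvexOn ℝ Set.univ f) (x y : E) {s : ℝ} (hs0 : 0 ≤ s) (hs1 : s ≤ 1) :
    Df f gradf (x + s • (y - x)) x ≤ s * Df f gradf y x := by
  have hc := hconv.2 (mem_univ x) (mem_univ y) (by linarith : (0:ℝ) ≤ 1 - s) hs0 (by ring)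
  have heq : (1 - s) • x + s • y = x + s • (y - x) := by
    rw [smul_sub, sub_smul, one_smul]; abel
  rw [heq] at hc
  simp only [smul_eq_mul] at hc
  have hlin : gradf x (x + s • (y - x) - x) = s * gradf x (y - x) := by
    rw [add_sub_cancel_left, map_smul]; rfl
  simp only [Df, hlin]
  nlinarith

/-- A convex Gâteaux differentiable function on a reflexive real Banach
space is totally convex on bounded subsets if and only if it is sequentially consistent. -/
theorem totallyConvexOnBounded_iff_sequentiallyConsistent
    [NormedAddCommGroup E] [NormedSpace ℝ E] [CompleteSpace E]
    (hrefl : IsReflexive E)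
    (f : E → ℝ) (gradf : E → E →L[ℝ] ℝ)
    (hconv : ConvexOn ℝ Set.univ f)
    (hgateaux : ∀ u : E, HasGateauxDerivAt f (gradf u) u) :
    TotallyConvexOnBounded f gradf ↔ SequentiallyConsistent f gradf := by
  constructor
  · -- totally convex → sequentially consistent
    intro htc x y hbx hD
    rw [Metric.tendsto_atTop]
    intro ε hε
    obtain ⟨c, hc, hcle⟩ := htc (Set.range x) ⟨x 0, mem_range_self 0⟩ hbx ε hε
    rw [Metric.tendsto_atTop] at hD
    obtain ⟨N, hN⟩ := hD c hc
    refine ⟨N, fun n hn => ?_⟩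
    have hDn : Df f gradf (y n) (x n) < c := by
      have := hN n hn
      rw [Real.dist_eq, sub_zero] at this
      calc Df f gradf (y n) (x n) ≤ |Df f gradf (y n) (x n)| := le_abs_self _
        _ < c := this
    rw [Real.dist_eq, sub_zero, abs_of_nonneg (norm_nonneg _)]
    by_contra hcon
    push_neg at hcon
    set t := ‖y n - x n‖ with htdef
    have ht0 : 0 < t := lt_of_lt_of_le hε hcon
    set s := ε / t with hsdef
    have hs0 : 0 ≤ s := le_of_lt (div_pos hε ht0)
    have hs1 : s ≤ 1 := (div_le_one ht0).mpr hcon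
    have hznorm : ‖x n + s • (y n - x n) - x n‖ = ε := by
      rw [add_sub_cancel_left, norm_smul, Real.norm_eq_abs, abs_of_nonneg hs0,
        ← htdef, hsdef, div_mul_cancel₀ _ (ne_of_gt ht0)]
    have h1 := hcle (x n) (mem_range_self n) _ hznorm
    have h2 := Df_segment f gradf hconv (x n) (y n) hs0 hs1
    have h3 : s * Df f gradf (y n) (x n) ≤ Df f gradf (y n) (x n) := by
      have := Df_nonneg' f gradf hconv hgateaux (y n) (x n)
      nlinarith
    linarith
  · -- sequentially consistent → totally convex
    intro hsc B hBne hBb t ht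
    by_contra hcon
    push_neg at hcon
    have h' : ∀ n : ℕ, ∃ x ∈ B, ∃ y : E, ‖y - x‖ = t ∧
        Df f gradf y x < ((n : ℝ) + 1)⁻¹ := by
      intro n
      exact hcon _ (by positivity)
    choose xs hxsB ys hys hDlt using h'
    have hbx : IsBounded (Set.range xs) :=
      hBb.subset (range_subset_iff.mpr hxsB)
    have hD : Tendsto (fun n => Df f gradf (ys n) (xs n)) atTop (𝓝 0) := by
      refine squeeze_zero (fun n => Df_nonneg' f gradf hconv hgateaux _ _)
        (fun n => le_of_lt (hDlt n)) ?_
      exact tendsto_one_div_add_atTop_nhds_zero_nat.congr (fun n => by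
        rw [one_div])
    have := hsc xs ys hbx hD
    have hconst : Tendsto (fun _ : ℕ => t) atTop (𝓝 0) := by
      refine this.congr (fun n => ?_)
      rw [hys n]
    exact absurd (tendsto_nhds_unique hconst tendsto_const_nhds) (ht.ne').symm
end
end

section
/- Let E be a reflexive real Banach space and f : E → ℝ a convex function that is uniformly Fréchet differentiable and bounded on bounded subsets of E. Then the gradient ∇f is uniformly continuous on bounded subsets of E from the strong topology of E to the strong topology of E*. -/
open Filter Bornology Set Topology Pointwise

noncomputable section

variable {E : Type*}

/-- `f` is bounded on bounded subsets of `E`. -/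
def BoundedOnBounded [NormedAddCommGroup E] [NormedSpace ℝ E] (f : E → ℝ) : Prop :=
  ∀ s : Set E, IsBounded s → IsBounded (f '' s)

/-- `f` is uniformly Fréchet differentiable on bounded subsets of `E`: the difference
quotients converge to `⟨∇f x, y⟩` uniformly for `x` in a bounded set and `‖y‖ = 1`. -/
def UnifFrechetDiffOnBounded [NormedAddCommGroup E] [NormedSpace ℝ E]
    (f : E → ℝ) (gradf : E → E →L[ℝ] ℝ) : Prop :=
  ∀ s : Set E, IsBounded s → ∀ ε > (0:ℝ), ∃ δ > (0:ℝ), ∀ x ∈ s, ∀ y : E, ‖y‖ = 1 →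
    ∀ t : ℝ, t ≠ 0 → |t| < δ → |(f (x + t • y) - f x) / t - gradf x y| < ε

/-- The subgradient inequality: `⟨∇f a, b − a⟩ ≤ f b − f a`. -/
lemma grad_le_sub_aux [NormedAddCommGroup E] [NormedSpace ℝ E]
    (f : E → ℝ) (gradf : E → E →L[ℝ] ℝ)
    (hconv : ConvexOn ℝ Set.univ f)
    (hufd : UnifFrechetDiffOnBounded f gradf) (a b : E) :
    gradf a (b - a) ≤ f b - f a := by
  rcases eq_or_ne b a with rfl | hne
  · simp
  set v := b - a with hvdef
  have hv : v ≠ 0 := sub_ne_zero.mpr hne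
  have hvn : 0 < ‖v‖ := norm_pos_iff.mpr hv
  have claim : ∀ ε > (0:ℝ), gradf a v ≤ f b - f a + ε := by
    intro ε hε
    obtain ⟨δ, hδ, H⟩ := hufd {a} isBounded_singleton (ε / ‖v‖) (div_pos hε hvn)
    set u := ‖v‖⁻¹ • v with hudef
    have hu : ‖u‖ = 1 := by
      rw [hudef, norm_smul, norm_inv, norm_norm, inv_mul_cancel₀ hvn.ne']
    set t := min (δ / 2) ‖v‖ with htdef
    have ht0 : 0 < t := lt_min (by linarith) hvn
    have htδ : |t| < δ := by
      rw [abs_of_pos ht0]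
      exact lt_of_le_of_lt (min_le_left _ _) (by linarith)
    have hq := H a rfl u hu t ht0.ne' htδ
    set s := t / ‖v‖ with hsdef
    have hs0 : 0 ≤ s := le_of_lt (div_pos ht0 hvn)
    have hs1 : s ≤ 1 := by rw [hsdef, div_le_one hvn]; exact min_le_right _ _
    have htu : t • u = s • v := by
      rw [hudef, smul_smul, hsdef, div_eq_mul_inv]
    have hab : a + v = b := by rw [hvdef]; abel
    have hcv : f (a + t • u) ≤ (1 - s) * f a + s * f b := by
      have h := hconv.2 (mem_univ a) (mem_univ b) (by linarith : (0:ℝ) ≤ 1 - s) hs0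
        (by ring : (1 - s) + s = 1)
      have heq : a + t • u = (1 - s) • a + s • b := by
        rw [htu, ← hab]; module
      rw [heq]; exact h
    have hquot : (f (a + t • u) - f a) / t ≤ (f b - f a) / ‖v‖ := by
      rw [div_le_div_iff₀ ht0 hvn]
      have hst : s * ‖v‖ = t := by rw [hsdef]; field_simp
      calc (f (a + t • u) - f a) * ‖v‖ ≤ (s * (f b - f a)) * ‖v‖ := by
            apply mul_le_mul_of_nonneg_right _ hvn.le
            nlinarith [hcv]
        _ = (f b - f a) * t := by rw [← hst]; ring
    have h1 : gradf a u < (f (a + t • u) - f a) / t + ε / ‖v‖ := by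
      have := (abs_lt.mp hq).1
      linarith
    have h2 : gradf a v = ‖v‖ * gradf a u := by
      have hsv : (‖v‖ : ℝ) • u = v := by
        rw [hudef, smul_smul, mul_inv_cancel₀ hvn.ne', one_smul]
      calc gradf a v = gradf a (‖v‖ • u) := by rw [hsv]
        _ = ‖v‖ * gradf a u := by rw [map_smul, smul_eq_mul]
    rw [h2]
    calc ‖v‖ * gradf a u ≤ ‖v‖ * ((f b - f a) / ‖v‖ + ε / ‖v‖) := by
          apply mul_le_mul_of_nonneg_left _ hvn.le
          linarith [h1, hquot]
      _ = f b - f a + ε := by field_simp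
  by_contra h
  push_neg at h
  linarith [claim ((gradf a v - (f b - f a)) / 2) (by linarith)]

/-- The gradient is bounded on bounded sets. -/
lemma grad_bdd_aux [NormedAddCommGroup E] [NormedSpace ℝ E]
    (f : E → ℝ) (gradf : E → E →L[ℝ] ℝ)
    (hufd : UnifFrechetDiffOnBounded f gradf)
    (hbdd : BoundedOnBounded f)
    (s : Set E) (hs : IsBounded s) :
    ∃ M : ℝ, 0 ≤ M ∧ ∀ x ∈ s, ‖gradf x‖ ≤ M := by
  obtain ⟨δ, hδ0, H⟩ := hufd s hs 1 one_pos
  set t := min (δ / 2) 1 with htdef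
  have ht0 : 0 < t := lt_min (by linarith) one_pos
  have ht1 : t ≤ 1 := min_le_right _ _
  have htδ : |t| < δ := by
    rw [abs_of_pos ht0]; exact lt_of_le_of_lt (min_le_left _ _) (by linarith)
  set s' := s + Metric.closedBall (0:E) 1 with hs'def
  have hs' : IsBounded s' := hs.add Metric.isBounded_closedBall
  obtain ⟨M₀, hM₀⟩ := (hbdd s' hs').subset_closedBall 0
  have hfb : ∀ z ∈ s', |f z| ≤ |M₀| := by
    intro z hz
    have := hM₀ (Set.mem_image_of_mem f hz)
    rw [Metric.mem_closedBall, Real.dist_eq, sub_zero] at this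
    exact this.trans (le_abs_self _)
  have hmem : ∀ x ∈ s, ∀ w : E, ‖w‖ ≤ 1 → x + w ∈ s' := by
    intro x hx w hw
    exact Set.add_mem_add hx (by rwa [Metric.mem_closedBall, dist_zero_right])
  refine ⟨2 * |M₀| / t + 1, by positivity, fun x hx => ?_⟩
  apply ContinuousLinearMap.opNorm_le_of_unit_norm (by positivity)
  intro u hu
  have hq := H x hx u hu t ht0.ne' htδ
  have hxu : x + t • u ∈ s' := hmem x hx (t • u)
    (by rw [norm_smul, hu, mul_one, Real.norm_eq_abs, abs_of_pos ht0]; exact ht1)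
  have hxs : x ∈ s' := by simpa using hmem x hx 0 (by simp)
  have b1 := hfb _ hxu
  have b2 := hfb _ hxs
  have habs : |(f (x + t • u) - f x) / t| ≤ 2 * |M₀| / t := by
    rw [abs_div, abs_of_pos ht0]
    apply (div_le_div_iff_of_pos_right ht0).mpr
    calc |f (x + t • u) - f x| ≤ |f (x + t • u)| + |f x| := abs_sub _ _
      _ ≤ 2 * |M₀| := by linarith
  have h1 := (abs_lt.mp hq).1
  have h2 := (abs_lt.mp hq).2
  have h3 := (abs_le.mp habs).1
  have h4 := (abs_le.mp habs).2
  rw [Real.norm_eq_abs]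
  exact abs_le.mpr ⟨by linarith, by linarith⟩

/-- `f` is Lipschitz on bounded sets (one-sided form). -/
lemma lip_aux [NormedAddCommGroup E] [NormedSpace ℝ E]
    (f : E → ℝ) (gradf : E → E →L[ℝ] ℝ)
    (hconv : ConvexOn ℝ Set.univ f)
    (hufd : UnifFrechetDiffOnBounded f gradf)
    (hbdd : BoundedOnBounded f)
    (s : Set E) (hs : IsBounded s) :
    ∃ L : ℝ, 0 ≤ L ∧ ∀ x ∈ s, ∀ y ∈ s, f x - f y ≤ L * ‖x - y‖ := by
  obtain ⟨M, hM0, hM⟩ := grad_bdd_aux f gradf hufd hbdd s hs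
  refine ⟨M, hM0, fun x hx y hy => ?_⟩
  have h1 : gradf x (y - x) ≤ f y - f x := grad_le_sub_aux f gradf hconv hufd x y
  have h2 : gradf x (x - y) = - gradf x (y - x) := by
    rw [← map_neg]; congr 1; abel
  have h3 : gradf x (x - y) ≤ ‖gradf x‖ * ‖x - y‖ := by
    calc gradf x (x - y) ≤ |gradf x (x - y)| := le_abs_self _
      _ = ‖gradf x (x - y)‖ := (Real.norm_eq_abs _).symm
      _ ≤ ‖gradf x‖ * ‖x - y‖ := (gradf x).le_opNorm _
  have h4 : ‖gradf x‖ * ‖x - y‖ ≤ M * ‖x - y‖ :=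
    mul_le_mul_of_nonneg_right (hM x hx) (norm_nonneg _)
  linarith [h1, h2.symm.le, h3]

/-- If a convex `f : E → ℝ` on a reflexive real Banach space is uniformly
Fréchet differentiable and bounded on bounded subsets of `E`, then `∇f` is uniformly
continuous on bounded subsets of `E` from the strong topology of `E` to the strong topology
of `E*`. -/
theorem grad_uniformly_continuous_on_bounded
    [NormedAddCommGroup E] [NormedSpace ℝ E] [CompleteSpace E]
    (hrefl : IsReflexive E)
    (f : E → ℝ) (gradf : E → E →L[ℝ] ℝ)
    (hconv : ConvexOn ℝ Set.univ f)
    (hufd : UnifFrechetDiffOnBounded f gradf)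
    (hbdd : BoundedOnBounded f) :
    ∀ s : Set E, IsBounded s → ∀ ε > (0:ℝ), ∃ δ > (0:ℝ),
      ∀ x ∈ s, ∀ y ∈ s, ‖x - y‖ < δ → ‖gradf x - gradf y‖ < ε := by
  intro s hs ε hε
  set s₁ := s + Metric.closedBall (0:E) 1 with hs₁def
  have hs₁ : IsBounded s₁ := hs.add Metric.isBounded_closedBall
  obtain ⟨L, hL0, hLip⟩ := lip_aux f gradf hconv hufd hbdd s₁ hs₁
  obtain ⟨δ₀, hδ₀, H⟩ := hufd s hs (ε / 4) (by linarith)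
  set t := min (δ₀ / 2) 1 with htdef
  have ht0 : 0 < t := lt_min (by linarith) one_pos
  have ht1 : t ≤ 1 := min_le_right _ _
  have htδ : |t| < δ₀ := by
    rw [abs_of_pos ht0]; exact lt_of_le_of_lt (min_le_left _ _) (by linarith)
  refine ⟨t * ε / (8 * (L + 1)), by positivity, ?_⟩
  set δ := t * ε / (8 * (L + 1)) with hδdef
  have hmem : ∀ x ∈ s, ∀ w : E, ‖w‖ ≤ 1 → x + w ∈ s₁ := by
    intro x hx w hw
    exact Set.add_mem_add hx (by rwa [Metric.mem_closedBall, dist_zero_right])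
  have keyhalf : ∀ a ∈ s, ∀ b ∈ s, ‖a - b‖ < δ → ∀ u : E, ‖u‖ = 1 →
      gradf a u - gradf b u ≤ 3 * ε / 4 := by
    intro a ha b hb hab u hu
    have hqa := H a ha u hu t ht0.ne' htδ
    have hqb := H b hb u hu t ht0.ne' htδ
    have htu : ‖t • u‖ ≤ 1 := by
      rw [norm_smul, hu, mul_one, Real.norm_eq_abs, abs_of_pos ht0]; exact ht1
    have hau : a + t • u ∈ s₁ := hmem a ha _ htu
    have hbu : b + t • u ∈ s₁ := hmem b hb _ htu
    have has : a ∈ s₁ := by simpa using hmem a ha 0 (by simp)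
    have hbs : b ∈ s₁ := by simpa using hmem b hb 0 (by simp)
    have hL1 : f (a + t • u) - f (b + t • u) ≤ L * ‖a - b‖ := by
      have := hLip _ hau _ hbu
      have heq : (a + t • u) - (b + t • u) = a - b := by abel
      rwa [heq] at this
    have hL2 : f b - f a ≤ L * ‖a - b‖ := by
      have := hLip _ hbs _ has
      rwa [norm_sub_rev] at this
    have e1 : gradf a u < (f (a + t • u) - f a) / t + ε / 4 := by
      linarith [(abs_lt.mp hqa).1]
    have e2 : (f (b + t • u) - f b) / t - ε / 4 < gradf b u := by
      linarith [(abs_lt.mp hqb).2]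
    have hdiv : (f (a + t • u) - f a) / t - (f (b + t • u) - f b) / t
        ≤ (2 * L * ‖a - b‖) / t := by
      rw [div_sub_div_same]
      apply (div_le_div_iff_of_pos_right ht0).mpr
      linarith [hL1, hL2]
    have hsmall : (2 * L * ‖a - b‖) / t ≤ ε / 4 := by
      rw [div_le_iff₀ ht0]
      have hd : ‖a - b‖ * (8 * (L + 1)) < t * ε := by
        rw [← lt_div_iff₀ (by positivity : (0:ℝ) < 8 * (L + 1))]
        exact hab
      nlinarith [norm_nonneg (a - b), hL0, hd]
    linarith [e1, e2, hdiv, hsmall]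
  intro x hx y hy hxy
  have hbound : ‖gradf x - gradf y‖ ≤ 3 * ε / 4 := by
    apply ContinuousLinearMap.opNorm_le_of_unit_norm (by linarith)
    intro u hu
    rw [ContinuousLinearMap.sub_apply, Real.norm_eq_abs]
    refine abs_le.mpr ⟨?_, keyhalf x hx y hy hxy u hu⟩
    have := keyhalf y hy x hx (by rwa [norm_sub_rev]) u hu
    linarith
  linarith
end
end

section
/- Let E be a reflexive real Banach space and f : E → ℝ a Gâteaux differentiable and totally convex function. If x₀ ∈ E and the sequence of Bregman distances {D_f(x_n, x₀)} is bounded, then the sequence {x_n} is bounded in norm. -/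
open Filter Bornology Set Topology

noncomputable section

variable {E : Type*}

/-- `f` is totally convex (at every point): the modulus of total convexity
`ν_f(x,t) = inf {D_f(y,x) : ‖y − x‖ = t}` is positive for every `x ∈ E` and `t > 0`. -/
def TotallyConvex [NormedAddCommGroup E] [NormedSpace ℝ E]
    (f : E → ℝ) (gradf : E → E →L[ℝ] ℝ) : Prop :=
  ∀ x : E, ∀ t > (0:ℝ), ∃ c > (0:ℝ), ∀ y : E, ‖y - x‖ = t → c ≤ Df f gradf y x

/-- For a Gâteaux differentiable and totally convex `f : E → ℝ` on a
reflexive real Banach space: if `x₀ ∈ E` and the sequence of Bregman distances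
`{D_f(x_n, x₀)}` is bounded, then `{x_n}` is bounded in norm. -/
theorem bounded_of_bregman_bounded
    [NormedAddCommGroup E] [NormedSpace ℝ E] [CompleteSpace E]
    (hrefl : IsReflexive E)
    (f : E → ℝ) (gradf : E → E →L[ℝ] ℝ)
    (hconv : ConvexOn ℝ Set.univ f)
    (hgateaux : ∀ u : E, HasGateauxDerivAt f (gradf u) u)
    (htc : TotallyConvex f gradf)
    (x₀ : E) (x : ℕ → E)
    (hb : IsBounded (Set.range fun n => Df f gradf (x n) x₀)) :
    IsBounded (Set.range x) := by
  obtain ⟨c, hc, hcc⟩ := htc x₀ 1 one_pos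
  obtain ⟨M, hM⟩ := isBounded_iff_forall_norm_le.1 hb
  have hMn : ∀ n, Df f gradf (x n) x₀ ≤ M := by
    intro n
    have := hM _ ⟨n, rfl⟩
    exact (abs_le.1 (by simpa using this)).2
  have key : ∀ n, ‖x n - x₀‖ ≤ max 1 (M / c) := by
    intro n
    by_contra hlt
    push_neg at hlt
    set s := ‖x n - x₀‖ with hs
    have hs1 : 1 < s := lt_of_le_of_lt (le_max_left _ _) hlt
    have hs0 : 0 < s := lt_trans zero_lt_one hs1
    set z := x₀ + (1 / s) • (x n - x₀) with hz
    have hznorm : ‖z - x₀‖ = 1 := by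
      rw [hz, add_sub_cancel_left, norm_smul]
      rw [Real.norm_eq_abs, abs_of_pos (by positivity : (0:ℝ) < 1 / s), ← hs]
      field_simp
    have hcz := hcc z hznorm
    -- convexity inequality
    have hzeq : z = (1 - 1 / s) • x₀ + (1 / s) • x n := by
      rw [hz, smul_sub]; module
    have hinv : 0 < 1 / s := by positivity
    have hinv1 : 1 / s ≤ 1 := by
      rw [div_le_one hs0]; exact hs1.le
    have hfz : f z ≤ (1 - 1 / s) * f x₀ + (1 / s) * f (x n) := by
      rw [hzeq]
      exact hconv.2 (mem_univ x₀) (mem_univ (x n)) (by linarith) hinv.le (by ring)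
    have hgrad : gradf x₀ (z - x₀) = (1 / s) * gradf x₀ (x n - x₀) := by
      rw [hz, add_sub_cancel_left, map_smul]; rfl
    have hDz : Df f gradf z x₀ ≤ (1 / s) * Df f gradf (x n) x₀ := by
      simp only [Df, hgrad]
      nlinarith [hfz]
    have hDn : s * c ≤ Df f gradf (x n) x₀ := by
      have h1 : c ≤ (1 / s) * Df f gradf (x n) x₀ := le_trans hcz hDz
      calc s * c ≤ s * ((1/s) * Df f gradf (x n) x₀) := by
            exact mul_le_mul_of_nonneg_left h1 hs0.le
        _ = Df f gradf (x n) x₀ := by field_simp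
    have hsM : s ≤ M / c := by
      rw [le_div_iff₀ hc]
      exact le_trans hDn (hMn n)
    exact absurd hsM (not_le.2 (lt_of_le_of_lt (le_max_right _ _) hlt))
  refine isBounded_iff_forall_norm_le.2 ⟨‖x₀‖ + max 1 (M / c), ?_⟩
  rintro _ ⟨n, rfl⟩
  calc ‖x n‖ = ‖x n - x₀ + x₀‖ := by rw [sub_add_cancel]
    _ ≤ ‖x n - x₀‖ + ‖x₀‖ := norm_add_le _ _
    _ ≤ ‖x₀‖ + max 1 (M / c) := by linarith [key n]
end
end

section
/- Let E be a reflexive real Banach space, C a nonempty closed convex subset of E, and f : E → ℝ a Gâteaux differentiable and totally convex function. For x ∈ E and z ∈ C, z = proj_C^f(x) if and only if ⟨∇f(x) − ∇f(z), y − z⟩ ≤ 0 for all y ∈ C. -/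
open Filter Bornology Set Topology

noncomputable section

variable {E : Type*}

/-- `z` is the Bregman projection `proj_C^f(x)` of `x` onto `C`: `z ∈ C` and `z` minimizes
`D_f(·, x)` over `C`. -/
def IsBregmanProj [NormedAddCommGroup E] [NormedSpace ℝ E]
    (f : E → ℝ) (gradf : E → E →L[ℝ] ℝ) (C : Set E) (x z : E) : Prop :=
  z ∈ C ∧ ∀ w ∈ C, Df f gradf z x ≤ Df f gradf w x

/-- Subgradient inequality from the Gâteaux derivative of a convex function. -/
lemma subgrad_aux [NormedAddCommGroup E] [NormedSpace ℝ E]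
    {f : E → ℝ} (hconv : ConvexOn ℝ Set.univ f) {f' : E →L[ℝ] ℝ} {z : E}
    (hg : HasGateauxDerivAt f f' z) (w : E) : f z + f' (w - z) ≤ f w := by
  have htend : Tendsto (fun t : ℝ => (f (z + t • (w - z)) - f z) / t) (𝓝[>] (0:ℝ))
      (𝓝 (f' (w - z))) :=
    (hg (w - z)).mono_left (nhdsWithin_mono _ (fun t ht => ne_of_gt ht))
  have hle : f' (w - z) ≤ f w - f z := by
    refine le_of_tendsto htend ?_
    filter_upwards [Ioc_mem_nhdsGT_of_mem (by norm_num : (0:ℝ) ∈ Ico (0:ℝ) 1)] with t ht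
    have ht0 : 0 < t := ht.1
    have hcc : z + t • (w - z) = (1 - t) • z + t • w := by module
    have := hconv.2 (mem_univ z) (mem_univ w) (sub_nonneg.mpr ht.2) ht0.le (by ring)
    rw [div_le_iff₀ ht0, hcc]
    simp only [smul_eq_mul] at this
    nlinarith
  linarith

/-- For a Gâteaux differentiable and totally convex `f : E → ℝ` on a
reflexive real Banach space and a nonempty closed convex `C ⊆ E`: for `x ∈ E` and `z ∈ C`,
`z = proj_C^f(x)` if and only if `⟨∇f(x) − ∇f(z), y − z⟩ ≤ 0` for all `y ∈ C`. -/
theorem bregmanProj_iff_variational_inequality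
    [NormedAddCommGroup E] [NormedSpace ℝ E] [CompleteSpace E]
    (hrefl : IsReflexive E)
    (C : Set E) (hCne : C.Nonempty) (hCclosed : IsClosed C) (hCconvex : Convex ℝ C)
    (f : E → ℝ) (gradf : E → E →L[ℝ] ℝ)
    (hconv : ConvexOn ℝ Set.univ f)
    (hgateaux : ∀ u : E, HasGateauxDerivAt f (gradf u) u)
    (htc : TotallyConvex f gradf)
    (x z : E) (hz : z ∈ C) :
    IsBregmanProj f gradf C x z ↔ ∀ y ∈ C, (gradf x - gradf z) (y - z) ≤ 0 := by
  constructor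
  · rintro ⟨-, hmin⟩ y hy
    set v := y - z with hv
    have key : 0 ≤ gradf z v - gradf x v := by
      have htend : Tendsto (fun t : ℝ => (f (z + t • v) - f z) / t - gradf x v)
          (𝓝[>] (0:ℝ)) (𝓝 (gradf z v - gradf x v)) :=
        ((hgateaux z v).mono_left (nhdsWithin_mono _ (fun t ht => ne_of_gt ht))).sub
          tendsto_const_nhds
      refine ge_of_tendsto htend ?_
      filter_upwards [Ioc_mem_nhdsGT_of_mem (by norm_num : (0:ℝ) ∈ Ico (0:ℝ) 1)] with t ht
      have ht0 : 0 < t := ht.1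
      have hcc : z + t • v = (1 - t) • z + t • y := by rw [hv]; module
      have hmem : z + t • v ∈ C := by
        rw [hcc]; exact hCconvex hz hy (sub_nonneg.mpr ht.2) ht0.le (by ring)
      have hge := hmin _ hmem
      unfold Df at hge
      have hlin : gradf x (z + t • v - x) = gradf x (z - x) + t * gradf x v := by
        have : z + t • v - x = (z - x) + t • v := by abel
        rw [this, map_add, map_smul]; rfl
      rw [sub_nonneg, le_div_iff₀ ht0]
      nlinarith [hge, hlin]
    simp only [ContinuousLinearMap.sub_apply]
    linarith
  · intro h
    refine ⟨hz, fun w hw => ?_⟩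
    have hsub := subgrad_aux hconv (hgateaux z) w
    have hvi := h w hw
    simp only [ContinuousLinearMap.sub_apply] at hvi
    unfold Df
    have hlin : gradf x (w - x) = gradf x (z - x) + gradf x (w - z) := by
      rw [← map_add]; congr 1; abel
    linarith
end
end

section
/- Let E be a reflexive real Banach space, C a nonempty closed convex subset of E, and f : E → ℝ a Gâteaux differentiable and totally convex function. Then for every x ∈ E and y ∈ C, D_f(y, proj_C^f(x)) + D_f(proj_C^f(x), x) ≤ D_f(y, x). -/
open Filter Bornology Set Topology

noncomputable section

variable {E : Type*}

/-- For a Gâteaux differentiable and totally convex `f : E → ℝ` on a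
reflexive real Banach space and a nonempty closed convex `C ⊆ E`: for every `x ∈ E` and
`y ∈ C`, `D_f(y, proj_C^f(x)) + D_f(proj_C^f(x), x) ≤ D_f(y, x)`. -/
theorem bregmanProj_pythagoras
    [NormedAddCommGroup E] [NormedSpace ℝ E] [CompleteSpace E]
    (hrefl : IsReflexive E)
    (C : Set E) (hCne : C.Nonempty) (hCclosed : IsClosed C) (hCconvex : Convex ℝ C)
    (f : E → ℝ) (gradf : E → E →L[ℝ] ℝ)
    (hconv : ConvexOn ℝ Set.univ f)
    (hgateaux : ∀ u : E, HasGateauxDerivAt f (gradf u) u)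
    (htc : TotallyConvex f gradf)
    (x : E) (z : E) (hz : IsBregmanProj f gradf C x z)
    (y : E) (hy : y ∈ C) :
    Df f gradf y z + Df f gradf z x ≤ Df f gradf y x := by
  set v := y - z with hv
  -- variational inequality: gradf x v ≤ gradf z v
  have key : gradf x v ≤ gradf z v := by
    have hquot : ∀ t ∈ Set.Ioc (0:ℝ) 1,
        gradf x v ≤ (f (z + t • v) - f z) / t := by
      intro t ht
      have hmem : z + t • v ∈ C := by
        have := hCconvex hz.1 hy (by linarith [ht.2] : (0:ℝ) ≤ 1 - t)
          (le_of_lt ht.1) (by ring)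
        have heq : (1 - t) • z + t • y = z + t • v := by
          simp only [hv]; module
        rwa [heq] at this
      have hle := hz.2 _ hmem
      simp only [Df] at hle
      have hexp : z + t • v - x = (z - x) + t • v := by abel
      rw [hexp, map_add, map_smul] at hle
      have ht' := ht.1
      rw [le_div_iff₀ ht']
      have hle' : f z ≤ f (z + t • v) - t * gradf x v := by
        have := hle
        simp only [smul_eq_mul] at this
        linarith
      linarith
    have htend : Tendsto (fun t : ℝ => (f (z + t • v) - f z) / t)
        (𝓝[>] (0:ℝ)) (𝓝 (gradf z v)) :=
      (hgateaux z v).mono_left (nhdsWithin_mono _ (fun t ht => ne_of_gt ht))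
    refine ge_of_tendsto htend ?_
    filter_upwards [Ioc_mem_nhdsGT_of_mem (Set.left_mem_Ico.2 one_pos)] with t ht
    exact hquot t ht
  have h1 : gradf x (y - x) - gradf x (z - x) = gradf x v := by
    rw [← map_sub]; congr 1; rw [hv]; abel
  simp only [Df]
  have h2 : gradf z (y - z) = gradf z v := by rw [hv]
  linarith
end
end

section
/- Let E be a reflexive real Banach space and f : E → ℝ a convex, Legendre, Gâteaux differentiable function. Then for all x ∈ E and all x*, y* ∈ E*, V_f(x, x*) + ⟨y*, ∇f*(x*) − x⟩ ≤ V_f(x, x* + y*), where V_f(x, x*) = f(x) − ⟨x*, x⟩ + f*(x*). -/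
open Filter Bornology Set Topology

noncomputable section

variable {E : Type*}

/-- The function `V_f(x, x*) = f(x) − ⟨x*, x⟩ + f*(x*)` associated with `f`, where `fstar`
is the Fenchel conjugate of `f`. -/
def Vf [NormedAddCommGroup E] [NormedSpace ℝ E]
    (f : E → ℝ) (fstar : (E →L[ℝ] ℝ) → ℝ) (x : E) (xstar : E →L[ℝ] ℝ) : ℝ :=
  f x - xstar x + fstar xstar

/-- Subgradient inequality for a convex Gâteaux differentiable function. -/
theorem gateaux_subgradient [NormedAddCommGroup E] [NormedSpace ℝ E]
    {f : E → ℝ} (hconv : ConvexOn ℝ Set.univ f) {f' : E →L[ℝ] ℝ} {u : E}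
    (hG : HasGateauxDerivAt f f' u) (v : E) :
    f' (v - u) ≤ f v - f u := by
  have hmono : 𝓝[>] (0:ℝ) ≤ 𝓝[≠] (0:ℝ) :=
    nhdsWithin_mono _ (fun t ht => ne_of_gt ht)
  refine le_of_tendsto ((hG (v - u)).mono_left hmono) ?_
  have hmem : Set.Ioc (0:ℝ) 1 ∈ 𝓝[>] (0:ℝ) :=
    Ioc_mem_nhdsGT_of_mem (by constructor <;> norm_num)
  filter_upwards [hmem] with t ht
  have ht0 : (0:ℝ) < t := ht.1
  have key : f (u + t • (v - u)) ≤ (1 - t) * f u + t * f v := by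
    have := hconv.2 (Set.mem_univ u) (Set.mem_univ v)
      (by linarith [ht.2] : (0:ℝ) ≤ 1 - t) (le_of_lt ht0) (by ring)
    have heq : (1 - t) • u + t • v = u + t • (v - u) := by
      rw [smul_sub]; module
    rw [heq] at this
    simpa using this
  rw [div_le_iff₀ ht0]
  nlinarith [key]

/-- For a convex, Legendre, Gâteaux differentiable `f : E → ℝ` on a
reflexive real Banach space, with Fenchel conjugate `f*` and `∇f* = (∇f)⁻¹`:
`V_f(x, x*) + ⟨y*, ∇f*(x*) − x⟩ ≤ V_f(x, x* + y*)` for all `x ∈ E` and `x*, y* ∈ E*`. -/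
theorem Vf_subdifferential_inequality
    [NormedAddCommGroup E] [NormedSpace ℝ E] [CompleteSpace E]
    (hrefl : IsReflexive E)
    (f : E → ℝ) (gradf : E → E →L[ℝ] ℝ)
    (hLegendre : IsLegendre f gradf)
    (fstar : (E →L[ℝ] ℝ) → ℝ)
    (hcof : ∀ xstar : E →L[ℝ] ℝ, BddAbove (Set.range fun u => xstar u - f u))
    (hfstar : ∀ xstar : E →L[ℝ] ℝ, fstar xstar = sSup (Set.range fun u => xstar u - f u))
    (gradfstar : (E →L[ℝ] ℝ) → E)
    (hinv₁ : Function.LeftInverse gradfstar gradf)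
    (hinv₂ : Function.RightInverse gradfstar gradf)
    (x : E) (xstar ystar : E →L[ℝ] ℝ) :
    Vf f fstar x xstar + ystar (gradfstar xstar - x) ≤ Vf f fstar x (xstar + ystar) := by
  set u := gradfstar xstar with hu
  have hgu : gradf u = xstar := hinv₂ xstar
  -- f* xstar ≤ xstar u - f u
  have hle : fstar xstar ≤ xstar u - f u := by
    rw [hfstar]
    apply csSup_le (Set.range_nonempty _)
    rintro _ ⟨v, rfl⟩
    have := gateaux_subgradient hLegendre.convexOn (hLegendre.gateaux u) v
    rw [hgu] at this
    have := this
    simp only [map_sub] at this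
    show xstar v - f v ≤ xstar u - f u
    linarith
  -- f* (xstar + ystar) ≥ (xstar + ystar) u - f u
  have hge : (xstar + ystar) u - f u ≤ fstar (xstar + ystar) := by
    rw [hfstar]
    exact le_csSup (hcof _) ⟨u, rfl⟩
  simp only [Vf, ContinuousLinearMap.add_apply, map_sub] at *
  linarith
end
end
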